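/- Let $(X,\sigma_X)$ be an irreducible one-sided shift of finite type on an alphabet of size $L$ with weak specification number $k$, $(Y,\sigma_Y)$ a subshift, $\pi: X \to Y$ a one-block factor map, and $f \in C(X)$ with variation constants $M_n$. Define $g_n$ on $Y$ as the fiberwise-supremum sums $g_n(y) = \sup_{E_n(y)}\sum_{x\in E_n(y)}e^{(S_nf)(x)}$. Then for every $n \ge 3$ and every word $y_1\dots y_n \in B_n(Y)$, there exist $0 \le q \le k$, a word $d_1\dots d_q \in B_q(Y)$, and a periodic point $y^* = (y_1\dots y_n d_1\dots d_q)^\infty \in Y$ such that $g_{j(n+q)}(y^*) \ge \big(\tfrac{e^{m_0}}{L^2 M_n^2}\big)^j \big(\sup\{g_n(z): z \in [y_1\dots y_n]\}\big)^j$ for every $j \in \mathbb{N}$, where $m_0 = \min_{0\le i\le k}\min_x (S_i f)(x)$. -/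
import Mathlib


open Filter Topology MeasureTheory

/-- The shift map on the full one-sided shift on `k` symbols. -/
def shiftMap {k : ℕ} : (ℕ → Fin k) → (ℕ → Fin k) := fun x n => x (n + 1)

/-- A one-sided subshift: a closed, shift-invariant subset of the full shift. -/
def IsSubshift {k : ℕ} (X : Set (ℕ → Fin k)) : Prop :=
  IsClosed X ∧ ∀ x ∈ X, shiftMap x ∈ X

/-- Birkhoff sum `S_n h = ∑_{i<n} h ∘ T^i`. -/
noncomputable def birk {α : Type*} (T : α → α) (h : α → ℝ) (n : ℕ) (x : α) : ℝ :=
  ∑ i ∈ Finset.range n, h (T^[i] x)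

/-- The word `u` of length `n` appears in (is allowable for) the subshift `X`. -/
def WordIn {k : ℕ} (X : Set (ℕ → Fin k)) {n : ℕ} (u : Fin n → Fin k) : Prop :=
  ∃ x ∈ X, ∀ i : Fin n, x (i : ℕ) = u i

/-- The cylinder set of the word `u` inside the subshift `X`. -/
def cylSet {k : ℕ} (X : Set (ℕ → Fin k)) {n : ℕ} (u : Fin n → Fin k) : Set X :=
  {x : X | ∀ i : Fin n, (x : ℕ → Fin k) (i : ℕ) = u i}

/-- The periodic sequence `(u)^∞` obtained by repeating the word `u`. -/
def periodize {k p : ℕ} (hp : 0 < p) (u : Fin p → Fin k) : ℕ → Fin k :=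
  fun i => u ⟨i % p, Nat.mod_lt i hp⟩

/-- A sequence `{log f_n}` is asymptotically additive on the subshift `X` (with shift `σ`)
if for every `ε > 0` there is a continuous `ρ` with
`limsup_n (1/n)‖log f_n - S_n ρ‖_∞ < ε`. -/
def AsympAdd {k : ℕ} (X : Set (ℕ → Fin k)) (σ : X → X) (f : ℕ → X → ℝ) : Prop :=
  ∀ ε : ℝ, 0 < ε → ∃ ρ : X → ℝ, Continuous ρ ∧
    Filter.limsup
      (fun n : ℕ => (1 / (n : ℝ)) * ⨆ x : X, |Real.log (f n x) - birk σ ρ n x|)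
      Filter.atTop < ε

/-- `X` is a one-step shift of finite type, given by a transition relation on symbols. -/
def IsSFT {k : ℕ} (X : Set (ℕ → Fin k)) : Prop :=
  ∃ A : Fin k → Fin k → Prop, X = {x | ∀ i : ℕ, A (x i) (x (i + 1))}

/-- `X` is an irreducible subshift: any two allowable words can be joined. -/
def IrreducibleSubshift {k : ℕ} (X : Set (ℕ → Fin k)) : Prop :=
  ∀ (n m : ℕ) (u : Fin n → Fin k) (v : Fin m → Fin k), WordIn X u → WordIn X v →
    ∃ (q : ℕ) (w : Fin q → Fin k), WordIn X (Fin.append (Fin.append u w) v)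

/-- Measure-theoretic entropy of a measure on a one-sided subshift, computed with the
canonical generating partition into cylinders. -/
noncomputable def mEntropy {k : ℕ} (X : Set (ℕ → Fin k)) (μ : MeasureTheory.Measure X) : ℝ :=
  Filter.liminf
    (fun n : ℕ => (1 / (n : ℝ)) *
      ∑ u : Fin n → Fin k, Real.negMulLog ((μ (cylSet X u)).toReal))
    Filter.atTop

-- The standard metric on the full shift: `d(x,y) = (1/2)^{min{i : x_i ≠ y_i}}`.
open Classical in
noncomputable def dSeq {k : ℕ} (x y : ℕ → Fin k) : ℝ :=
  if x = y then 0 else (1 / 2 : ℝ) ^ (sInf {i : ℕ | x i ≠ y i})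

/-- `P_n(σ, π, f, δ)(y)`: supremum of `∑_{x ∈ E} e^{S_n f(x)}` over `(n,δ)`-separated
subsets `E` of the fiber `π⁻¹(y)`. -/
noncomputable def relPn {k l : ℕ} (X : Set (ℕ → Fin k)) (σ : X → X)
    (πs : X → (ℕ → Fin l)) (f : X → ℝ) (n : ℕ) (δ : ℝ) (y : ℕ → Fin l) : ℝ :=
  sSup {s : ℝ | ∃ E : Finset X, (∀ x ∈ E, πs x = y) ∧
    (∀ x ∈ E, ∀ x' ∈ E, x ≠ x' →
      ∃ i < n, δ ≤ dSeq ((σ^[i] x : X) : ℕ → Fin k) ((σ^[i] x' : X) : ℕ → Fin k)) ∧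
    s = ∑ x ∈ E, Real.exp (birk σ f n x)}

/-- The relative pressure function `P(σ, π, f) : (ℕ → Fin l) → ℝ` of `f`. -/
noncomputable def relP {k l : ℕ} (X : Set (ℕ → Fin k)) (σ : X → X)
    (πs : X → (ℕ → Fin l)) (f : X → ℝ) (y : ℕ → Fin l) : ℝ :=
  ⨆ δ : {δ : ℝ // 0 < δ},
    Filter.limsup (fun n : ℕ => (1 / (n : ℝ)) * Real.log (relPn X σ πs f n δ.1 y))
      Filter.atTop

/-- `g_n(y) = sup_{E_n(y)} ∑_{x ∈ E_n(y)} e^{S_n f(x)}`, where `E_n(y)` consists of exactly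
one point from each cylinder `[x_1…x_n]` of `X` whose word is mapped by the one-block map
to `y_1…y_n`. -/
noncomputable def gfun {k l : ℕ} (X : Set (ℕ → Fin k)) (σ : X → X)
    (πs : X → (ℕ → Fin l)) (f : X → ℝ) (n : ℕ) (y : ℕ → Fin l) : ℝ :=
  sSup {s : ℝ | ∃ E : Finset X,
    (∀ x ∈ E, ∀ i : Fin n, πs x (i : ℕ) = y (i : ℕ)) ∧
    (∀ x ∈ E, ∀ x' ∈ E, (∀ i : Fin n, (x : ℕ → Fin k) (i : ℕ) = (x' : ℕ → Fin k) (i : ℕ)) →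
      x = x') ∧
    (∀ u : Fin n → Fin k,
      (∃ z : X, (∀ i : Fin n, (z : ℕ → Fin k) (i : ℕ) = u i) ∧
        ∀ i : Fin n, πs z (i : ℕ) = y (i : ℕ)) →
      ∃ x ∈ E, ∀ i : Fin n, (x : ℕ → Fin k) (i : ℕ) = u i) ∧
    s = ∑ x ∈ E, Real.exp (birk σ f n x)}

/-- `X` has the weak specification property with specification number `p`. -/
def WeakSpec {k : ℕ} (X : Set (ℕ → Fin k)) (p : ℕ) : Prop :=
  ∀ (n m : ℕ) (u : Fin n → Fin k) (v : Fin m → Fin k), WordIn X u → WordIn X v →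
    ∃ q, q ≤ p ∧ ∃ w : Fin q → Fin k, WordIn X (Fin.append (Fin.append u w) v)

/-- The variation constant `M_n` of `f`:
`M_n = sup { e^{S_n f(x)} / e^{S_n f(x')} : x_i = x'_i for 1 ≤ i ≤ n }`. -/
noncomputable def varConst {k : ℕ} (X : Set (ℕ → Fin k)) (σ : X → X) (f : X → ℝ)
    (n : ℕ) : ℝ :=
  sSup {r : ℝ | ∃ x x' : X, (∀ i : Fin n, (x : ℕ → Fin k) (i : ℕ) = (x' : ℕ → Fin k) (i : ℕ)) ∧
    r = Real.exp (birk σ f n x) / Real.exp (birk σ f n x')}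

/-- `min_{0 ≤ q ≤ p} min_x e^{S_q f (x)}`. -/
noncomputable def minConst {k : ℕ} (X : Set (ℕ → Fin k)) (σ : X → X) (f : X → ℝ)
    (p : ℕ) : ℝ :=
  sInf {r : ℝ | ∃ q ≤ p, ∃ x : X, r = Real.exp (birk σ f q x)}

/-! ### Auxiliary lemmas for the proof -/

section AuxArith

lemma aux_succ_small {m i : ℕ} (h : i % m + 1 < m) :
    (i + 1) % m = i % m + 1 ∧ (i + 1) / m = i / m := by
  have hm : 0 < m := by omega
  have hd := Nat.div_add_mod i m
  constructor
  · conv_lhs => rw [show i + 1 = (i % m + 1) + m * (i / m) by omega]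
    rw [Nat.add_mul_mod_self_left, Nat.mod_eq_of_lt h]
  · conv_lhs => rw [show i + 1 = (i % m + 1) + m * (i / m) by omega]
    rw [Nat.add_mul_div_left _ _ hm, Nat.div_eq_of_lt h, Nat.zero_add]

lemma aux_succ_big {m i : ℕ} (hm : 0 < m) (h : i % m + 1 = m) :
    (i + 1) % m = 0 ∧ (i + 1) / m = i / m + 1 := by
  have hd := Nat.div_add_mod i m
  have hmm : m * (i / m + 1) = m * (i / m) + m := by ring
  constructor
  · rw [show i + 1 = m * (i / m + 1) by omega]
    exact Nat.mul_mod_right _ _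
  · rw [show i + 1 = m * (i / m + 1) by omega]
    exact Nat.mul_div_cancel_left _ hm

lemma aux_block {m t i : ℕ} (hm : 0 < m) (hi : i < m) :
    (t * m + i) % m = i ∧ (t * m + i) / m = t := by
  constructor
  · rw [show t * m + i = i + m * t by ring, Nat.add_mul_mod_self_left, Nat.mod_eq_of_lt hi]
  · rw [show t * m + i = i + m * t by ring, Nat.add_mul_div_left _ _ hm, Nat.div_eq_of_lt hi,
      Nat.zero_add]

lemma aux_append_eval {α : Type*} {n q : ℕ} (v : Fin n → α) (d : Fin q → α) (r : ℕ)
    (hr : r < n + q) :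
    Fin.append v d ⟨r, hr⟩ = if h : r < n then v ⟨r, h⟩ else d ⟨r - n, by omega⟩ := by
  by_cases h : r < n
  · rw [dif_pos h]
    exact Fin.append_left v d ⟨r, h⟩
  · rw [dif_neg h]
    have : (⟨r, hr⟩ : Fin (n + q)) = Fin.natAdd n ⟨r - n, by omega⟩ := by
      apply Fin.ext; simp; omega
    rw [this]
    exact Fin.append_right v d _

end AuxArith

section AuxBirk

lemma aux_iterate_coe {k : ℕ} {X : Set (ℕ → Fin k)} (σX : X → X)
    (hσX : ∀ x : X, (σX x : ℕ → Fin k) = shiftMap (x : ℕ → Fin k)) (m : ℕ) (x : X) (i : ℕ) :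
    ((σX^[m] x : X) : ℕ → Fin k) i = (x : ℕ → Fin k) (i + m) := by
  induction m generalizing i with
  | zero => rfl
  | succ m ih =>
      rw [Function.iterate_succ_apply']
      rw [hσX]
      show ((σX^[m] x : X) : ℕ → Fin k) (i + 1) = (x : ℕ → Fin k) (i + (m + 1))
      rw [ih (i+1), show i + 1 + m = i + (m + 1) by omega]

lemma aux_birk_add {α : Type*} (T : α → α) (h : α → ℝ) (a b : ℕ) (x : α) :
    birk T h (a + b) x = birk T h a x + birk T h b (T^[a] x) := by
  unfold birk
  rw [Finset.sum_range_add]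
  congr 1
  refine Finset.sum_congr rfl fun i _ => ?_
  rw [← Function.iterate_add_apply, show i + a = a + i by omega]

lemma aux_birk_mul {α : Type*} (T : α → α) (h : α → ℝ) (m j : ℕ) (x : α) :
    birk T h (j * m) x = ∑ t ∈ Finset.range j, birk T h m (T^[t * m] x) := by
  induction j with
  | zero => simp [birk]
  | succ j ih =>
      rw [Finset.sum_range_succ, ← ih, show (j+1) * m = j * m + m by ring,
        aux_birk_add]

end AuxBirk

section AuxPseq

/-- The concatenated periodic sequence: blocks of length `m = n + q`; block `t` consists of
the first `n` symbols of `c t` followed by the symbols `n ≤ pos < m` of `ζ`. -/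
noncomputable def pseqX {k : ℕ} (X : Set (ℕ → Fin k)) (n m : ℕ)
    (ζ : ℕ → Fin k) (c : ℕ → X) : ℕ → Fin k :=
  fun i => if i % m < n then (c (i / m) : ℕ → Fin k) (i % m) else ζ (i % m)

lemma mem_sft {k : ℕ} {X : Set (ℕ → Fin k)} {A : Fin k → Fin k → Prop}
    (hA : X = {x | ∀ i : ℕ, A (x i) (x (i + 1))}) (z : ℕ → Fin k) :
    z ∈ X ↔ ∀ i : ℕ, A (z i) (z (i + 1)) := by
  subst hA; exact Iff.rfl

lemma pseq_word {k : ℕ} {X : Set (ℕ → Fin k)} {n q : ℕ}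
    (ζ : ℕ → Fin k) (c : ℕ → X) (t : ℕ) {i : ℕ} (hi : i < n) :
    pseqX X n (n + q) ζ c (t * (n + q) + i) = (c t : ℕ → Fin k) i := by
  have hm : 0 < n + q := by omega
  obtain ⟨h1, h2⟩ := aux_block (t := t) (i := i) hm (by omega)
  unfold pseqX
  rw [h1, h2, if_pos hi]

lemma pseq_mem {k : ℕ} {X : Set (ℕ → Fin k)} {A : Fin k → Fin k → Prop}
    (hA : X = {x | ∀ i : ℕ, A (x i) (x (i + 1))})
    {n q : ℕ} (hn : 0 < n) (ζ : ℕ → Fin k) (hζ : ζ ∈ X)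
    (c : ℕ → X)
    (hca : ∀ t, (c t : ℕ → Fin k) 0 = ζ 0)
    (hcb : ∀ t, (c t : ℕ → Fin k) (n - 1) = ζ (n - 1))
    (hζa : ζ (n + q) = ζ 0) :
    pseqX X n (n + q) ζ c ∈ X := by
  set m := n + q with hmdef
  have hm : 0 < m := by omega
  have hζA : ∀ i : ℕ, A (ζ i) (ζ (i + 1)) := (mem_sft hA ζ).mp hζ
  have hcA : ∀ t (i : ℕ), A ((c t : ℕ → Fin k) i) ((c t : ℕ → Fin k) (i + 1)) :=
    fun t => (mem_sft hA _).mp (c t).2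
  rw [mem_sft hA]
  intro i
  set r := i % m with hr
  have hrm : r < m := Nat.mod_lt _ hm
  by_cases hsucc : r + 1 < m
  · obtain ⟨h1, h2⟩ := aux_succ_small (m := m) (i := i) (by omega)
    unfold pseqX
    rw [h1, h2, ← hr]
    by_cases h3 : r + 1 < n
    · rw [if_pos (by omega), if_pos h3]
      exact hcA _ r
    · by_cases h4 : r < n
      · have hrn : r = n - 1 := by omega
        rw [if_pos h4, if_neg (by omega), show r + 1 = n by omega, hrn, hcb]
        have := hζA (n - 1)
        rw [show n - 1 + 1 = n by omega] at this
        exact this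
      · rw [if_neg h4, if_neg (by omega)]
        exact hζA r
  · have hreq : r + 1 = m := by omega
    obtain ⟨h1, h2⟩ := aux_succ_big (m := m) (i := i) hm (by omega)
    unfold pseqX
    rw [h1, h2, if_pos hn, ← hr, hca]
    have hstep : A (ζ (m - 1)) (ζ 0) := by
      have := hζA (m - 1)
      rw [show m - 1 + 1 = m by omega] at this
      rw [hmdef] at this
      rw [hζa] at this
      exact this
    by_cases h4 : r < n
    · rw [if_pos h4, show r = n - 1 by omega, hcb, show n - 1 = m - 1 by omega]
      exact hstep
    · rw [if_neg h4, show r = m - 1 by omega]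
      exact hstep

lemma pseq_pi {k l : ℕ} {X : Set (ℕ → Fin k)} {n q : ℕ} (hn : 0 < n)
    (ζ : ℕ → Fin k) (c : ℕ → X) (τ : Fin k → Fin l) (v : Fin n → Fin l)
    (hcv : ∀ t (i : ℕ) (h : i < n), τ ((c t : ℕ → Fin k) i) = v ⟨i, h⟩)
    (i : ℕ) :
    τ (pseqX X n (n + q) ζ c i) =
      Fin.append v (fun s : Fin q => τ (ζ (n + (s : ℕ))))
        ⟨i % (n + q), Nat.mod_lt _ (by omega)⟩ := by
  have hm : 0 < n + q := by omega
  have hrm : i % (n + q) < n + q := Nat.mod_lt _ hm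
  rw [aux_append_eval]
  unfold pseqX
  by_cases h4 : i % (n + q) < n
  · rw [if_pos h4, dif_pos h4, hcv _ _ h4]
  · rw [if_neg h4, dif_neg h4]
    have harg : n + ((⟨i % (n + q) - n, by omega⟩ : Fin q) : ℕ) = i % (n + q) := by
      show n + (i % (n + q) - n) = i % (n + q)
      omega
    rw [harg]

end AuxPseq

section GFun

variable {k l : ℕ} (X : Set (ℕ → Fin k)) (σX : X → X) (πs : X → ℕ → Fin l)
  (f : X → ℝ) (N : ℕ) (y : ℕ → Fin l)

/-- The set whose supremum defines `gfun`. -/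
def gSet : Set ℝ :=
  {s : ℝ | ∃ E : Finset X,
    (∀ x ∈ E, ∀ i : Fin N, πs x (i : ℕ) = y (i : ℕ)) ∧
    (∀ x ∈ E, ∀ x' ∈ E, (∀ i : Fin N, (x : ℕ → Fin k) (i : ℕ) = (x' : ℕ → Fin k) (i : ℕ)) →
      x = x') ∧
    (∀ u : Fin N → Fin k,
      (∃ z : X, (∀ i : Fin N, (z : ℕ → Fin k) (i : ℕ) = u i) ∧
        ∀ i : Fin N, πs z (i : ℕ) = y (i : ℕ)) →
      ∃ x ∈ E, ∀ i : Fin N, (x : ℕ → Fin k) (i : ℕ) = u i) ∧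
    s = ∑ x ∈ E, Real.exp (birk σX f N x)}

lemma gfun_eq_sSup : gfun X σX πs f N y = sSup (gSet X σX πs f N y) := rfl

variable {C : ℝ} (hC : ∀ x : X, |f x| ≤ C)

include hC in
lemma birk_abs_le (m : ℕ) (x : X) : |birk σX f m x| ≤ m * C := by
  unfold birk
  calc |∑ i ∈ Finset.range m, f (σX^[i] x)| ≤ ∑ i ∈ Finset.range m, |f (σX^[i] x)| :=
        Finset.abs_sum_le_sum_abs _ _
    _ ≤ ∑ _i ∈ Finset.range m, C := Finset.sum_le_sum fun i _ => hC _
    _ = m * C := by simp [mul_comm]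

include hC in
lemma gSet_le_bound : ∀ s ∈ gSet X σX πs f N y, s ≤ (k : ℝ) ^ N * Real.exp (N * C) := by
  classical
  rintro s ⟨E, h1, h2, h3, rfl⟩
  have hterm : ∀ x ∈ E, Real.exp (birk σX f N x) ≤ Real.exp (N * C) := fun x _ =>
    Real.exp_le_exp.mpr (le_trans (le_abs_self _) (birk_abs_le X σX f hC N x))
  calc ∑ x ∈ E, Real.exp (birk σX f N x) ≤ ∑ _x ∈ E, Real.exp ((N : ℝ) * C) :=
        Finset.sum_le_sum hterm
    _ = (E.card : ℝ) * Real.exp (N * C) := by simp [mul_comm]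
    _ ≤ (k : ℝ) ^ N * Real.exp (N * C) := by
        refine mul_le_mul_of_nonneg_right ?_ (Real.exp_nonneg _)
        have hinj : Set.InjOn (fun x : X => fun i : Fin N => (x : ℕ → Fin k) (i : ℕ))
            (E : Finset X) := by
          intro x hx x' hx' hxy
          exact h2 x hx x' hx' (fun i => congrFun hxy i)
        have hcard : E.card ≤ k ^ N := by
          calc E.card ≤ (Finset.univ : Finset (Fin N → Fin k)).card :=
                Finset.card_le_card_of_injOn _ (fun _ _ => Finset.mem_univ _) hinj
            _ = k ^ N := by simp
        calc (E.card : ℝ) ≤ ((k ^ N : ℕ) : ℝ) := by exact_mod_cast hcard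
          _ = (k : ℝ) ^ N := by push_cast; ring

include hC in
lemma gSet_bddAbove : BddAbove (gSet X σX πs f N y) :=
  ⟨(k : ℝ) ^ N * Real.exp (N * C), fun s hs => gSet_le_bound X σX πs f N y hC s hs⟩

lemma gfun_exists_mem (x₀ : X) (P₀ : Finset X)
    (h1 : ∀ x ∈ P₀, ∀ i : Fin N, πs x (i : ℕ) = y (i : ℕ))
    (h2 : ∀ x ∈ P₀, ∀ x' ∈ P₀,
      (∀ i : Fin N, (x : ℕ → Fin k) (i : ℕ) = (x' : ℕ → Fin k) (i : ℕ)) → x = x') :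
    ∃ s ∈ gSet X σX πs f N y, ∑ x ∈ P₀, Real.exp (birk σX f N x) ≤ s := by
  classical
  set word : X → (Fin N → Fin k) := fun x => fun i : Fin N => (x : ℕ → Fin k) (i : ℕ) with hword
  set Rl : (Fin N → Fin k) → Prop := fun u =>
    ∃ z : X, (∀ i : Fin N, (z : ℕ → Fin k) (i : ℕ) = u i) ∧
      ∀ i : Fin N, πs z (i : ℕ) = y (i : ℕ) with hRl
  set r : (Fin N → Fin k) → X := fun u =>
    if h : ∃ x ∈ P₀, word x = u then h.choose
    else if h' : Rl u then h'.choose else x₀ with hrdef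
  have hrP : ∀ u, (h : ∃ x ∈ P₀, word x = u) → r u ∈ P₀ ∧ word (r u) = u := by
    intro u h
    have := h.choose_spec
    simp only [hrdef, dif_pos h]
    exact this
  have hrR : ∀ u, Rl u → word (r u) = u ∧ ∀ i : Fin N, πs (r u) (i : ℕ) = y (i : ℕ) := by
    intro u hu
    by_cases h : ∃ x ∈ P₀, word x = u
    · obtain ⟨hmem, hw⟩ := hrP u h
      exact ⟨hw, h1 _ hmem⟩
    · have : r u = hu.choose := by simp only [hrdef, dif_neg h, dif_pos hu]
      rw [this]
      obtain ⟨hz1, hz2⟩ := hu.choose_spec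
      exact ⟨funext hz1, hz2⟩
  set F : Finset X := (Finset.univ.filter Rl).image r with hF
  refine ⟨∑ x ∈ F, Real.exp (birk σX f N x), ⟨F, ?_, ?_, ?_, rfl⟩, ?_⟩
  · intro x hx
    obtain ⟨u, hu, rfl⟩ := Finset.mem_image.mp hx
    exact (hrR u (Finset.mem_filter.mp hu).2).2
  · intro x hx x' hx' hxx
    obtain ⟨u, hu, rfl⟩ := Finset.mem_image.mp hx
    obtain ⟨u', hu', rfl⟩ := Finset.mem_image.mp hx'
    have h1' := (hrR u (Finset.mem_filter.mp hu).2).1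
    have h2' := (hrR u' (Finset.mem_filter.mp hu').2).1
    have : u = u' := by
      rw [← h1', ← h2']
      exact funext hxx
    rw [this]
  · intro u hu
    have huRl : Rl u := hu
    refine ⟨r u, Finset.mem_image.mpr ⟨u, Finset.mem_filter.mpr ⟨Finset.mem_univ _, huRl⟩, rfl⟩,
      ?_⟩
    exact fun i => congrFun (hrR u huRl).1 i
  · have hrinj : Set.InjOn r (Finset.univ.filter Rl : Finset (Fin N → Fin k)) := by
      intro u hu u' hu' huu
      have h1' := (hrR u (Finset.mem_filter.mp hu).2).1
      have h2' := (hrR u' (Finset.mem_filter.mp hu').2).1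
      rw [← h1', ← h2', huu]
    rw [Finset.sum_image (fun u hu u' hu' h => hrinj hu hu' h)]
    have hsub : P₀.image word ⊆ Finset.univ.filter Rl := by
      intro u hu
      obtain ⟨x, hx, rfl⟩ := Finset.mem_image.mp hu
      exact Finset.mem_filter.mpr ⟨Finset.mem_univ _, ⟨x, fun i => rfl, h1 x hx⟩⟩
    have hwinj : Set.InjOn word (P₀ : Finset X) := by
      intro x hx x' hx' hxx
      exact h2 x hx x' hx' (fun i => congrFun hxx i)
    have hPsum : ∑ x ∈ P₀, Real.exp (birk σX f N x) =
        ∑ u ∈ P₀.image word, Real.exp (birk σX f N (r u)) := by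
      rw [Finset.sum_image (fun x hx x' hx' h => hwinj hx hx' h)]
      refine Finset.sum_congr rfl fun x hx => ?_
      have hex : ∃ x' ∈ P₀, word x' = word x := ⟨x, hx, rfl⟩
      obtain ⟨hmem, hw⟩ := hrP _ hex
      have : r (word x) = x := hwinj hmem hx hw
      rw [this]
    rw [hPsum]
    refine Finset.sum_le_sum_of_subset_of_nonneg hsub fun u _ _ => (Real.exp_pos _).le

include hC in
lemma gfun_ge (x₀ : X) (P₀ : Finset X)
    (h1 : ∀ x ∈ P₀, ∀ i : Fin N, πs x (i : ℕ) = y (i : ℕ))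
    (h2 : ∀ x ∈ P₀, ∀ x' ∈ P₀,
      (∀ i : Fin N, (x : ℕ → Fin k) (i : ℕ) = (x' : ℕ → Fin k) (i : ℕ)) → x = x') :
    ∑ x ∈ P₀, Real.exp (birk σX f N x) ≤ gfun X σX πs f N y := by
  obtain ⟨s, hs, hle⟩ := gfun_exists_mem X σX πs f N y x₀ P₀ h1 h2
  exact le_trans hle (le_csSup (gSet_bddAbove X σX πs f N y hC) hs)

include hC in
lemma gfun_nonneg (x₀ : X) : 0 ≤ gfun X σX πs f N y := by
  have := gfun_ge X σX πs f N y hC x₀ ∅ (by simp) (by simp)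
  simpa using this

include hC in
lemma gSet_nonempty (x₀ : X) : (gSet X σX πs f N y).Nonempty := by
  obtain ⟨s, hs, -⟩ := gfun_exists_mem X σX πs f N y x₀ ∅ (by simp) (by simp)
  exact ⟨s, hs⟩

include hC in
lemma gfun_le (x₀ : X) : gfun X σX πs f N y ≤ (k : ℝ) ^ N * Real.exp (N * C) := by
  rw [gfun_eq_sSup]
  exact csSup_le (gSet_nonempty X σX πs f N y hC x₀) (gSet_le_bound X σX πs f N y hC)

end GFun

section Core

lemma stmt15_core {k l : ℕ} {X : Set (ℕ → Fin k)} {Y : Set (ℕ → Fin l)}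
    {A : Fin k → Fin k → Prop} (hA : X = {x | ∀ i : ℕ, A (x i) (x (i + 1))})
    (σX : X → X) (hσX : ∀ x : X, (σX x : ℕ → Fin k) = shiftMap (x : ℕ → Fin k))
    (π : X → Y) (τ : Fin k → Fin l)
    (hτ : ∀ (x : X) (i : ℕ), (π x : ℕ → Fin l) i = τ ((x : ℕ → Fin k) i))
    (f : X → ℝ) {C : ℝ} (hC : ∀ x : X, |f x| ≤ C)
    {n : ℕ} (hn : 0 < n) {v : Fin n → Fin l}
    {k₀ : ℕ} (hspec : WeakSpec X k₀)
    {M m₀ : ℝ} (hM0 : 0 < M)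
    (hMle : ∀ x x' : X, (∀ i : ℕ, i < n → (x : ℕ → Fin k) i = (x' : ℕ → Fin k) i) →
      Real.exp (birk σX f n x) ≤ M * Real.exp (birk σX f n x'))
    (hm₀le : ∀ i ≤ k₀, ∀ x : X, m₀ ≤ birk σX f i x)
    (xb : X) (hxbv : ∀ (i : ℕ) (h : i < n), τ ((xb : ℕ → Fin k) i) = v ⟨i, h⟩) :
    ∃ q, q ≤ k₀ ∧ ∃ d : Fin q → Fin l, ∃ hpos : 0 < n + q,
      periodize hpos (Fin.append v d) ∈ Y ∧
      ∀ j : ℕ, 0 < j → ∀ E' : Finset X,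
        (∀ x ∈ E', (∀ (i : ℕ) (h : i < n), τ ((x : ℕ → Fin k) i) = v ⟨i, h⟩) ∧
          (x : ℕ → Fin k) 0 = (xb : ℕ → Fin k) 0 ∧
          (x : ℕ → Fin k) (n - 1) = (xb : ℕ → Fin k) (n - 1)) →
        (∀ x ∈ E', ∀ x' ∈ E',
          (∀ i : ℕ, i < n → (x : ℕ → Fin k) i = (x' : ℕ → Fin k) i) → x = x') →
        (Real.exp m₀ / M) ^ j * (∑ x ∈ E', Real.exp (birk σX f n x)) ^ j ≤
          gfun X σX (fun z => ((π z : ℕ → Fin l))) f (j * (n + q))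
            (periodize hpos (Fin.append v d)) := by
  classical
  have hu : WordIn X (fun i : Fin n => (xb : ℕ → Fin k) (i : ℕ)) :=
    ⟨(xb : ℕ → Fin k), xb.2, fun i => rfl⟩
  obtain ⟨q, hqk, w, ζ0, hζX, hζ⟩ := hspec n n _ _ hu hu
  have hζu : ∀ (i : ℕ) (h : i < n), ζ0 i = (xb : ℕ → Fin k) i := by
    intro i h
    have h0 := hζ (Fin.castAdd n (Fin.castAdd q ⟨i, h⟩))
    rw [Fin.append_left, Fin.append_left] at h0
    simpa using h0
  have hζnq : ζ0 (n + q) = ζ0 0 := by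
    have h1 := hζ (Fin.natAdd (n + q) ⟨0, hn⟩)
    rw [Fin.append_right] at h1
    have h2 : ζ0 0 = (xb : ℕ → Fin k) 0 := hζu 0 hn
    simp only [Fin.coe_natAdd, Fin.val_mk, Nat.add_zero] at h1
    rw [h1, h2]
  set d : Fin q → Fin l := fun s => τ (ζ0 (n + (s : ℕ))) with hd_def
  have hpos : 0 < n + q := by omega
  have hζv : ∀ (i : ℕ) (h : i < n), τ (ζ0 i) = v ⟨i, h⟩ := fun i h => by
    rw [hζu i h]; exact hxbv i h
  -- membership of the basic periodic point, giving `periodize (v ++ d) ∈ Y`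
  have hp1mem : pseqX X n (n + q) ζ0 (fun _ => xb) ∈ X :=
    pseq_mem hA hn ζ0 hζX _ (fun _ => (hζu 0 hn).symm)
      (fun _ => (hζu (n - 1) (by omega)).symm) hζnq
  have hYmem : periodize hpos (Fin.append v d) ∈ Y := by
    have hcoe : ((π ⟨_, hp1mem⟩ : Y) : ℕ → Fin l) = periodize hpos (Fin.append v d) := by
      funext i
      rw [hτ]
      rw [pseq_pi hn ζ0 (fun _ => xb) τ v (fun t i h => hxbv i h) i]
      rfl
    rw [← hcoe]
    exact (π ⟨_, hp1mem⟩).2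
  refine ⟨q, hqk, d, hpos, hYmem, ?_⟩
  intro j hj E' hE'p hE'inj
  set N := j * (n + q) with hN_def
  set ystar := periodize hpos (Fin.append v d) with hystar_def
  set tups : Finset (Fin j → X) := Fintype.piFinset (fun _ : Fin j => E') with htups_def
  have htups_mem : ∀ cc : Fin j → X, cc ∈ tups → ∀ t, cc t ∈ E' := by
    intro cc hcc t
    exact (Fintype.mem_piFinset.mp hcc) t
  set cext : (Fin j → X) → ℕ → X := fun cc t => cc ⟨t % j, Nat.mod_lt _ hj⟩ with hcext_def
  have hca : ∀ cc ∈ tups, ∀ t : ℕ, (cext cc t : ℕ → Fin k) 0 = ζ0 0 := by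
    intro cc hcc t
    rw [(hE'p _ (htups_mem cc hcc _)).2.1]
    exact (hζu 0 hn).symm
  have hcb : ∀ cc ∈ tups, ∀ t : ℕ, (cext cc t : ℕ → Fin k) (n - 1) = ζ0 (n - 1) := by
    intro cc hcc t
    rw [(hE'p _ (htups_mem cc hcc _)).2.2]
    exact (hζu (n - 1) (by omega)).symm
  have hcv : ∀ cc ∈ tups, ∀ t (i : ℕ) (h : i < n),
      τ ((cext cc t : ℕ → Fin k) i) = v ⟨i, h⟩ := by
    intro cc hcc t i h
    exact (hE'p _ (htups_mem cc hcc _)).1 i h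
  have hpmem : ∀ cc : Fin j → X, cc ∈ tups → pseqX X n (n + q) ζ0 (cext cc) ∈ X :=
    fun cc hcc => pseq_mem hA hn ζ0 hζX _ (hca cc hcc) (hcb cc hcc) hζnq
  set pxF : (Fin j → X) → X := fun cc =>
    if h : cc ∈ tups then ⟨_, hpmem cc h⟩ else xb with hpxF_def
  have hpxF_coe : ∀ cc ∈ tups, (pxF cc : ℕ → Fin k) = pseqX X n (n + q) ζ0 (cext cc) := by
    intro cc hcc
    rw [hpxF_def]
    simp only [dif_pos hcc]
  have hword : ∀ cc ∈ tups, ∀ (t : Fin j) (i : ℕ), i < n →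
      (pxF cc : ℕ → Fin k) ((t : ℕ) * (n + q) + i) = (cc t : ℕ → Fin k) i := by
    intro cc hcc t i h
    rw [hpxF_coe cc hcc, pseq_word ζ0 (cext cc) (t : ℕ) h]
    have : ((⟨(t : ℕ) % j, Nat.mod_lt _ hj⟩ : Fin j)) = t :=
      Fin.ext (Nat.mod_eq_of_lt t.isLt)
    show (cc ⟨(t : ℕ) % j, Nat.mod_lt _ hj⟩ : ℕ → Fin k) i = _
    rw [this]
  have hpxinj : ∀ cc ∈ tups, ∀ cc' ∈ tups,
      (∀ i : Fin N, (pxF cc : ℕ → Fin k) (i : ℕ) = (pxF cc' : ℕ → Fin k) (i : ℕ)) →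
        cc = cc' := by
    intro cc hcc cc' hcc' heq
    funext t
    refine hE'inj _ (htups_mem cc hcc t) _ (htups_mem cc' hcc' t) ?_
    intro i hi
    have hlt : (t : ℕ) * (n + q) + i < N := by
      have ht := t.isLt
      calc (t : ℕ) * (n + q) + i < (t : ℕ) * (n + q) + (n + q) := by omega
        _ = ((t : ℕ) + 1) * (n + q) := by ring
        _ ≤ j * (n + q) := Nat.mul_le_mul_right _ (by omega)
    have h2 : (pxF cc : ℕ → Fin k) ((t : ℕ) * (n + q) + i) =
        (pxF cc' : ℕ → Fin k) ((t : ℕ) * (n + q) + i) := heq ⟨_, hlt⟩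
    rw [hword cc hcc t i hi, hword cc' hcc' t i hi] at h2
    exact h2
  have hpxpi : ∀ cc ∈ tups, ∀ i : ℕ, ((π (pxF cc) : Y) : ℕ → Fin l) i = ystar i := by
    intro cc hcc i
    rw [hτ, hpxF_coe cc hcc]
    rw [pseq_pi hn ζ0 (cext cc) τ v (hcv cc hcc) i]
    rfl
  set P₀ : Finset X := tups.image pxF with hP₀_def
  have hP1 : ∀ x ∈ P₀, ∀ i : Fin N,
      (fun z : X => ((π z : ℕ → Fin l))) x (i : ℕ) = ystar (i : ℕ) := by
    intro x hx i
    obtain ⟨cc, hcc, rfl⟩ := Finset.mem_image.mp hx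
    exact hpxpi cc hcc (i : ℕ)
  have hP2 : ∀ x ∈ P₀, ∀ x' ∈ P₀,
      (∀ i : Fin N, (x : ℕ → Fin k) (i : ℕ) = (x' : ℕ → Fin k) (i : ℕ)) → x = x' := by
    intro x hx x' hx' hxx
    obtain ⟨cc, hcc, rfl⟩ := Finset.mem_image.mp hx
    obtain ⟨cc', hcc', rfl⟩ := Finset.mem_image.mp hx'
    rw [hpxinj cc hcc cc' hcc' hxx]
  have hg := gfun_ge X σX (fun z : X => ((π z : ℕ → Fin l))) f N ystar hC xb P₀ hP1 hP2
  have himg : ∑ x ∈ P₀, Real.exp (birk σX f N x) =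
      ∑ cc ∈ tups, Real.exp (birk σX f N (pxF cc)) := by
    rw [hP₀_def]
    refine Finset.sum_image ?_
    intro cc hcc cc' hcc' h
    exact hpxinj cc hcc cc' hcc' (fun i => congrFun (congrArg Subtype.val h) (i : ℕ))
  have hbl : ∀ cc ∈ tups,
      (Real.exp m₀ / M) ^ j * ∏ t : Fin j, Real.exp (birk σX f n (cc t)) ≤
        Real.exp (birk σX f N (pxF cc)) := by
    intro cc hcc
    have hNsum : birk σX f N (pxF cc) =
        ∑ t ∈ Finset.range j, birk σX f (n + q) (σX^[t * (n + q)] (pxF cc)) :=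
      aux_birk_mul σX f (n + q) j (pxF cc)
    have hblock : ∀ t : Fin j,
        Real.exp m₀ / M * Real.exp (birk σX f n (cc t)) ≤
          Real.exp (birk σX f (n + q) (σX^[(t : ℕ) * (n + q)] (pxF cc))) := by
      intro t
      set z : X := σX^[(t : ℕ) * (n + q)] (pxF cc) with hz
      have hsplit : birk σX f (n + q) z = birk σX f n z + birk σX f q (σX^[n] z) :=
        aux_birk_add σX f n q z
      have hmatch : ∀ i : ℕ, i < n → (cc t : ℕ → Fin k) i = (z : ℕ → Fin k) i := by
        intro i hi
        rw [hz, aux_iterate_coe σX hσX _ _ i,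
          show i + (t : ℕ) * (n + q) = (t : ℕ) * (n + q) + i by ring]
        exact (hword cc hcc t i hi).symm
      have h1 : Real.exp (birk σX f n (cc t)) ≤ M * Real.exp (birk σX f n z) :=
        hMle _ _ hmatch
      have h2 : Real.exp m₀ ≤ Real.exp (birk σX f q (σX^[n] z)) :=
        Real.exp_le_exp.mpr (hm₀le q hqk _)
      rw [hsplit, Real.exp_add]
      calc Real.exp m₀ / M * Real.exp (birk σX f n (cc t))
          ≤ Real.exp m₀ / M * (M * Real.exp (birk σX f n z)) := by
            refine mul_le_mul_of_nonneg_left h1 (by positivity)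
        _ = Real.exp (birk σX f n z) * Real.exp m₀ := by
            field_simp
        _ ≤ Real.exp (birk σX f n z) * Real.exp (birk σX f q (σX^[n] z)) :=
            mul_le_mul_of_nonneg_left h2 (Real.exp_nonneg _)
    rw [hNsum, Real.exp_sum, ← Fin.prod_univ_eq_prod_range
      (fun t => Real.exp (birk σX f (n + q) (σX^[t * (n + q)] (pxF cc)))) j]
    calc (Real.exp m₀ / M) ^ j * ∏ t : Fin j, Real.exp (birk σX f n (cc t))
        = ∏ t : Fin j, Real.exp m₀ / M * Real.exp (birk σX f n (cc t)) := by
          rw [Finset.prod_mul_distrib, Finset.prod_const, Finset.card_univ, Fintype.card_fin]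
      _ ≤ ∏ t : Fin j, Real.exp (birk σX f (n + q) (σX^[(t : ℕ) * (n + q)] (pxF cc))) :=
          Finset.prod_le_prod (fun t _ => by positivity) (fun t _ => hblock t)
  have hsum2 : ∑ cc ∈ tups, (Real.exp m₀ / M) ^ j *
      ∏ t : Fin j, Real.exp (birk σX f n (cc t)) =
      (Real.exp m₀ / M) ^ j * (∑ x ∈ E', Real.exp (birk σX f n x)) ^ j := by
    rw [← Finset.mul_sum]
    congr 1
    rw [htups_def, ← Finset.prod_univ_sum (fun _ : Fin j => E')
      (fun _ x => Real.exp (birk σX f n x))]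
    rw [Finset.prod_const, Finset.card_univ, Fintype.card_fin]
  calc (Real.exp m₀ / M) ^ j * (∑ x ∈ E', Real.exp (birk σX f n x)) ^ j
      = ∑ cc ∈ tups, (Real.exp m₀ / M) ^ j *
          ∏ t : Fin j, Real.exp (birk σX f n (cc t)) := hsum2.symm
    _ ≤ ∑ cc ∈ tups, Real.exp (birk σX f N (pxF cc)) := Finset.sum_le_sum hbl
    _ = ∑ x ∈ P₀, Real.exp (birk σX f N x) := himg.symm
    _ ≤ _ := hg

end Core

theorem stmt15 {k l : ℕ}
    (X : Set (ℕ → Fin k)) (hX : IsSubshift X)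
    (hSFT : IsSFT X) (hirr : IrreducibleSubshift X)
    (k₀ : ℕ) (hspec : WeakSpec X k₀)
    (Y : Set (ℕ → Fin l)) (hY : IsSubshift Y)
    (σX : X → X) (hσX : ∀ x : X, (σX x : ℕ → Fin k) = shiftMap (x : ℕ → Fin k))
    (σY : Y → Y) (hσY : ∀ y : Y, (σY y : ℕ → Fin l) = shiftMap (y : ℕ → Fin l))
    -- π is a one-block factor map
    (π : X → Y) (hπc : Continuous π) (hπs : Function.Surjective π)
    (hπcomm : ∀ x, π (σX x) = σY (π x))
    (hπ1 : ∃ τ : Fin k → Fin l, ∀ (x : X) (i : ℕ), (π x : ℕ → Fin l) i = τ ((x : ℕ → Fin k) i))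
    (f : X → ℝ) (hf : Continuous f) :
    ∀ n : ℕ, 3 ≤ n → ∀ v : Fin n → Fin l, WordIn Y v →
      ∃ q, q ≤ k₀ ∧ ∃ d : Fin q → Fin l, ∃ hpos : 0 < n + q,
        periodize hpos (Fin.append v d) ∈ Y ∧
        ∀ j : ℕ, 0 < j →
          (Real.exp (sInf {r : ℝ | ∃ i ≤ k₀, ∃ x : X, r = birk σX f i x}) /
              ((k : ℝ) ^ 2 * (varConst X σX f n) ^ 2)) ^ j *
            (sSup ((fun y : Y => gfun X σX (fun z => ((π z : ℕ → Fin l))) f n (y : ℕ → Fin l)) ''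
              cylSet Y v)) ^ j ≤
          gfun X σX (fun z => ((π z : ℕ → Fin l))) f (j * (n + q))
            (periodize hpos (Fin.append v d)) := by
  classical
  intro n hn3 v hv
  obtain ⟨τ, hτ⟩ := hπ1
  obtain ⟨A, hA⟩ := hSFT
  have hn : 0 < n := by omega
  obtain ⟨y₀s, hy₀Y, hy₀v⟩ := hv
  obtain ⟨x₀, hx₀⟩ := hπs ⟨y₀s, hy₀Y⟩
  have hk : 0 < k := (x₀ : ℕ → Fin k) 0 |>.pos
  -- a uniform bound on |f|
  have hcs : CompactSpace X := isCompact_iff_compactSpace.mp hX.1.isCompact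
  obtain ⟨C, hC0, hC⟩ : ∃ C : ℝ, 0 ≤ C ∧ ∀ x : X, |f x| ≤ C := by
    obtain ⟨C, hCb⟩ := (isCompact_range (continuous_abs.comp hf)).bddAbove
    exact ⟨C, le_trans (abs_nonneg _) (hCb ⟨x₀, rfl⟩), fun x => hCb ⟨x, rfl⟩⟩
  -- facts about the variation constant M
  set M := varConst X σX f n with hM_def
  have hMbdd : BddAbove {r : ℝ | ∃ x x' : X,
      (∀ i : Fin n, (x : ℕ → Fin k) (i : ℕ) = (x' : ℕ → Fin k) (i : ℕ)) ∧
      r = Real.exp (birk σX f n x) / Real.exp (birk σX f n x')} := by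
    refine ⟨Real.exp (2 * (n * C)), ?_⟩
    rintro r ⟨x, x', -, rfl⟩
    rw [← Real.exp_sub]
    refine Real.exp_le_exp.mpr ?_
    have h1 := abs_le.mp (birk_abs_le X σX f hC n x)
    have h2 := abs_le.mp (birk_abs_le X σX f hC n x')
    linarith [h1.2, h2.1]
  have hM1 : 1 ≤ M := by
    refine le_csSup hMbdd ⟨x₀, x₀, fun i => rfl, ?_⟩
    rw [div_self (Real.exp_ne_zero _)]
  have hM0 : 0 < M := lt_of_lt_of_le one_pos hM1
  have hMle : ∀ x x' : X, (∀ i : ℕ, i < n → (x : ℕ → Fin k) i = (x' : ℕ → Fin k) i) →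
      Real.exp (birk σX f n x) ≤ M * Real.exp (birk σX f n x') := by
    intro x x' hmatch
    have hmem : Real.exp (birk σX f n x) / Real.exp (birk σX f n x') ∈ {r : ℝ | ∃ x x' : X,
        (∀ i : Fin n, (x : ℕ → Fin k) (i : ℕ) = (x' : ℕ → Fin k) (i : ℕ)) ∧
        r = Real.exp (birk σX f n x) / Real.exp (birk σX f n x')} :=
      ⟨x, x', fun i => hmatch (i : ℕ) i.isLt, rfl⟩
    have hle := le_csSup hMbdd hmem
    rw [div_le_iff₀ (Real.exp_pos _)] at hle
    have hMsup : sSup {r : ℝ | ∃ x x' : X,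
        (∀ i : Fin n, (x : ℕ → Fin k) (i : ℕ) = (x' : ℕ → Fin k) (i : ℕ)) ∧
        r = Real.exp (birk σX f n x) / Real.exp (birk σX f n x')} = M := rfl
    rw [hMsup] at hle
    exact hle
  -- facts about m₀
  set m₀ := sInf {r : ℝ | ∃ i ≤ k₀, ∃ x : X, r = birk σX f i x} with hm₀_def
  have hm₀le : ∀ i ≤ k₀, ∀ x : X, m₀ ≤ birk σX f i x := by
    intro i hi x
    refine csInf_le ⟨-(k₀ * C), ?_⟩ ⟨i, hi, x, rfl⟩
    rintro r ⟨i', hi', x', rfl⟩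
    have h1 := (abs_le.mp (birk_abs_le X σX f hC i' x')).1
    have h2 : (i' : ℝ) * C ≤ (k₀ : ℝ) * C := by
      refine mul_le_mul_of_nonneg_right ?_ hC0
      exact_mod_cast hi'
    linarith
  -- the supremum B over the cylinder
  set πs : X → ℕ → Fin l := fun z => ((π z : ℕ → Fin l)) with hπs_def
  set B := sSup ((fun y : Y => gfun X σX πs f n (y : ℕ → Fin l)) '' cylSet Y v) with hB_def
  have hy₀cyl : (⟨y₀s, hy₀Y⟩ : Y) ∈ cylSet Y v := fun i => hy₀v i
  have himgne : ((fun y : Y => gfun X σX πs f n (y : ℕ → Fin l)) '' cylSet Y v).Nonempty :=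
    ⟨_, ⟨⟨y₀s, hy₀Y⟩, hy₀cyl, rfl⟩⟩
  have himgbdd : BddAbove ((fun y : Y => gfun X σX πs f n (y : ℕ → Fin l)) '' cylSet Y v) := by
    refine ⟨(k : ℝ) ^ n * Real.exp (n * C), ?_⟩
    rintro r ⟨yy, -, rfl⟩
    exact gfun_le X σX πs f n _ hC x₀
  have hB0 : 0 ≤ B := le_trans (gfun_nonneg X σX πs f n _ hC x₀)
    (le_csSup himgbdd ⟨⟨y₀s, hy₀Y⟩, hy₀cyl, rfl⟩)
  rcases le_or_gt B 0 with hBneg | hBpos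
  · -- degenerate case B = 0
    have hxbv : ∀ (i : ℕ) (h : i < n), τ ((x₀ : ℕ → Fin k) i) = v ⟨i, h⟩ := by
      intro i h
      rw [← hτ x₀ i, hx₀]
      exact hy₀v ⟨i, h⟩
    obtain ⟨q, hqk, d, hpos, hY, -⟩ := stmt15_core hA σX hσX π τ hτ f hC hn hspec hM0
      hMle hm₀le x₀ hxbv
    refine ⟨q, hqk, d, hpos, hY, ?_⟩
    intro j hj
    have hBz : B = 0 := le_antisymm hBneg hB0
    rw [hBz, zero_pow hj.ne', mul_zero]
    exact gfun_nonneg X σX πs f _ _ hC x₀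
  · -- main case B > 0
    have hΦ : ∀ m' : ℕ, ∃ κ : Fin k × Fin k, ∃ E' : Finset X, E'.Nonempty ∧
        (∀ x ∈ E', (∀ (i : ℕ) (h : i < n), τ ((x : ℕ → Fin k) i) = v ⟨i, h⟩) ∧
          (x : ℕ → Fin k) 0 = κ.1 ∧ (x : ℕ → Fin k) (n - 1) = κ.2) ∧
        (∀ x ∈ E', ∀ x' ∈ E',
          (∀ i : ℕ, i < n → (x : ℕ → Fin k) i = (x' : ℕ → Fin k) i) → x = x') ∧
        (B - B / ((m' : ℝ) + 2)) / (k : ℝ) ^ 2 ≤ ∑ x ∈ E', Real.exp (birk σX f n x) := by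
      intro m'
      set ε := B / ((m' : ℝ) + 2) with hε_def
      have hεpos : 0 < ε := div_pos hBpos (by positivity)
      have hεB : ε < B := by
        rw [hε_def, div_lt_iff₀ (by positivity)]
        have hh : 0 < B * ((m' : ℝ) + 1) := mul_pos hBpos (by positivity)
        nlinarith [hh]
      obtain ⟨g, hgmem, hgt⟩ := exists_lt_of_lt_csSup himgne
        (show B - ε < B by linarith)
      obtain ⟨yy, hyycyl, rfl⟩ := hgmem
      have hgt : B - ε < gfun X σX πs f n ((yy : Y) : ℕ → Fin l) := hgt
      rw [gfun_eq_sSup] at hgt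
      obtain ⟨s, hsmem, hst⟩ := exists_lt_of_lt_csSup
        (gSet_nonempty X σX πs f n ((yy : Y) : ℕ → Fin l) hC x₀) hgt
      obtain ⟨E, hE1, hE2, hE3, rfl⟩ := hsmem
      set key : X → Fin k × Fin k := fun x => ((x : ℕ → Fin k) 0, (x : ℕ → Fin k) (n - 1))
        with hkey_def
      have hfib : ∑ κ : Fin k × Fin k,
          ∑ x ∈ E.filter (fun x => key x = κ), Real.exp (birk σX f n x) =
          ∑ x ∈ E, Real.exp (birk σX f n x) := Finset.sum_fiberwise E key _
      have hex : ∃ κ : Fin k × Fin k, (B - ε) / (k : ℝ) ^ 2 ≤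
          ∑ x ∈ E.filter (fun x => key x = κ), Real.exp (birk σX f n x) := by
        by_contra hcon
        push_neg at hcon
        have hne : (Finset.univ : Finset (Fin k × Fin k)).Nonempty :=
          ⟨key x₀, Finset.mem_univ _⟩
        have hlt := Finset.sum_lt_sum_of_nonempty hne (fun κ _ => hcon κ)
        rw [hfib, Finset.sum_const, nsmul_eq_mul] at hlt
        have hcard : ((Finset.univ : Finset (Fin k × Fin k)).card : ℝ) = (k : ℝ) ^ 2 := by
          simp [sq]
        rw [hcard, mul_div_cancel₀ _ (show ((k : ℝ) ^ 2) ≠ 0 by positivity)] at hlt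
        linarith
      obtain ⟨κ, hκ⟩ := hex
      refine ⟨κ, E.filter (fun x => key x = κ), ?_, ?_, ?_, hκ⟩
      · rw [Finset.nonempty_iff_ne_empty]
        intro hemp
        rw [hemp, Finset.sum_empty] at hκ
        have : (0 : ℝ) < (B - ε) / (k : ℝ) ^ 2 := div_pos (by linarith) (by positivity)
        linarith
      · intro x hx
        obtain ⟨hxE, hxκ⟩ := Finset.mem_filter.mp hx
        refine ⟨?_, ?_, ?_⟩
        · intro i h
          have h1 : ((π x : Y) : ℕ → Fin l) i = ((yy : Y) : ℕ → Fin l) i := hE1 x hxE ⟨i, h⟩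
          have h2 : ((yy : Y) : ℕ → Fin l) i = v ⟨i, h⟩ := hyycyl ⟨i, h⟩
          rw [← hτ x i, h1]
          exact h2
        · exact congrArg Prod.fst hxκ
        · exact congrArg Prod.snd hxκ
      · intro x hx x' hx' hxx
        exact hE2 x (Finset.mem_filter.mp hx).1 x' (Finset.mem_filter.mp hx').1
          (fun i => hxx (i : ℕ) i.isLt)
    -- pigeonhole on the recurrent endpoint pair
    obtain ⟨κ0, hκ0⟩ := Finite.exists_infinite_fiber (fun m' => (hΦ m').choose)
    have hS := Set.infinite_coe_iff.mp hκ0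
    obtain ⟨m₁, hm₁⟩ := hS.nonempty
    have hm₁' : (hΦ m₁).choose = κ0 := hm₁
    obtain ⟨E₁, hE₁ne, hE₁p, hE₁inj, hE₁sum⟩ := (hΦ m₁).choose_spec
    obtain ⟨xb, hxbE₁⟩ := hE₁ne
    have hxbv : ∀ (i : ℕ) (h : i < n), τ ((xb : ℕ → Fin k) i) = v ⟨i, h⟩ :=
      (hE₁p xb hxbE₁).1
    have hxb1 : (xb : ℕ → Fin k) 0 = κ0.1 := by
      rw [← hm₁']; exact (hE₁p xb hxbE₁).2.1
    have hxb2 : (xb : ℕ → Fin k) (n - 1) = κ0.2 := by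
      rw [← hm₁']; exact (hE₁p xb hxbE₁).2.2
    obtain ⟨q, hqk, d, hpos, hY, hquant⟩ := stmt15_core hA σX hσX π τ hτ f hC hn hspec hM0
      hMle hm₀le xb hxbv
    refine ⟨q, hqk, d, hpos, hY, ?_⟩
    intro j hj
    by_contra hlt
    push_neg at hlt
    set R := gfun X σX πs f (j * (n + q)) (periodize hpos (Fin.append v d)) with hR_def
    set c₁ := Real.exp m₀ / (M * (k : ℝ) ^ 2) with hc₁_def
    have hc₁pos : 0 < c₁ := by
      rw [hc₁_def]
      exact div_pos (Real.exp_pos _) (mul_pos hM0 (by positivity))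
    have hk2 : (0 : ℝ) < (k : ℝ) ^ 2 := by positivity
    have hcc₁ : Real.exp m₀ / ((k : ℝ) ^ 2 * M ^ 2) ≤ c₁ := by
      rw [hc₁_def]
      refine div_le_div_of_nonneg_left (Real.exp_nonneg _) (mul_pos hM0 hk2) ?_
      have key : 0 ≤ (M - 1) * ((k : ℝ) ^ 2) * M :=
        mul_nonneg (mul_nonneg (sub_nonneg.mpr hM1) hk2.le) hM0.le
      nlinarith [key]
    have hg0 : R < c₁ ^ j * B ^ j := by
      refine lt_of_lt_of_le hlt ?_
      exact mul_le_mul_of_nonneg_right (pow_le_pow_left₀ (by positivity) hcc₁ j)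
        (pow_nonneg hB0 j)
    have hgcont : Continuous (fun ε : ℝ => c₁ ^ j * (B - ε) ^ j) :=
      continuous_const.mul ((continuous_const.sub continuous_id).pow j)
    have hev : ∀ᶠ ε in nhds (0 : ℝ), R < c₁ ^ j * (B - ε) ^ j := by
      have h00 : R < c₁ ^ j * (B - (0 : ℝ)) ^ j := by
        rw [sub_zero]; exact hg0
      exact (hgcont.tendsto 0).eventually (eventually_gt_nhds h00)
    obtain ⟨δ, hδpos, hδ⟩ := Metric.eventually_nhds_iff.mp hev
    obtain ⟨m', hm'S, hm'gt⟩ := hS.exists_gt ⌈B / δ⌉₊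
    have hm'κ : (hΦ m').choose = κ0 := hm'S
    set ε := B / ((m' : ℝ) + 2) with hε_def
    have hεpos : 0 < ε := div_pos hBpos (by positivity)
    have hεδ : ε < δ := by
      rw [hε_def, div_lt_iff₀ (by positivity)]
      have h1 : B / δ < (m' : ℝ) := by
        refine lt_of_le_of_lt (Nat.le_ceil _) ?_
        exact_mod_cast hm'gt
      rw [div_lt_iff₀ hδpos] at h1
      nlinarith [hδpos]
    have hεB : ε ≤ B := by
      rw [hε_def]
      refine div_le_self hBpos.le ?_
      have : (0 : ℝ) ≤ (m' : ℝ) := Nat.cast_nonneg _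
      linarith
    have hR1 : R < c₁ ^ j * (B - ε) ^ j := by
      refine hδ ?_
      rw [Real.dist_eq, sub_zero, abs_of_pos hεpos]
      exact hεδ
    obtain ⟨E', hE'ne, hE'p, hE'inj, hE'sum⟩ := (hΦ m').choose_spec
    have hE'p' : ∀ x ∈ E', (∀ (i : ℕ) (h : i < n), τ ((x : ℕ → Fin k) i) = v ⟨i, h⟩) ∧
        (x : ℕ → Fin k) 0 = (xb : ℕ → Fin k) 0 ∧
        (x : ℕ → Fin k) (n - 1) = (xb : ℕ → Fin k) (n - 1) := by
      intro x hx
      obtain ⟨h1, h2, h3⟩ := hE'p x hx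
      refine ⟨h1, ?_, ?_⟩
      · rw [h2, hm'κ, hxb1]
      · rw [h3, hm'κ, hxb2]
    have hq2 := hquant j hj E' hE'p' hE'inj
    have h5 : c₁ ^ j * (B - ε) ^ j ≤
        (Real.exp m₀ / M) ^ j * (∑ x ∈ E', Real.exp (birk σX f n x)) ^ j := by
      rw [← mul_pow, ← mul_pow]
      refine pow_le_pow_left₀ ?_ ?_ j
      · exact mul_nonneg hc₁pos.le (by linarith)
      · have heq : c₁ * (B - ε) = Real.exp m₀ / M * ((B - ε) / (k : ℝ) ^ 2) := by
          rw [hc₁_def]; ring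
        rw [heq]
        exact mul_le_mul_of_nonneg_left hE'sum
          (div_nonneg (Real.exp_nonneg _) hM0.le)
    linarith
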